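/- For two nodes u, v in a continuous-time dynamic graph G, u and v are continuous-time dynamic unfolding-tree (CUT) equivalent (i.e., their unfolding trees at every timestamp t_i are equal) if and only if they are continuous-time dynamic 1-WL (CWL) equivalent (i.e., their 1-WL colors at every timestamp t_i agree at every refinement iteration). -/
import Mathlib

def UT (A : Type) : ℕ → Type
  | 0 => A
  | d+1 => A × Multiset (A × UT A d)

/-- An attributed graph with an explicit set of currently existing (active) nodes. -/
structure AGraph (V A : Type) where
  active : Finset V
  nbr : V → Finset V
  attr : V → A
  eattr : V → V → A

def AGraph.Valid {V A : Type} (g : AGraph V A) : Prop :=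
  (∀ v u, u ∈ g.nbr v → u ∈ g.active) ∧ (∀ v, v ∉ g.active → g.nbr v = ∅) ∧
  (∀ u v, u ∈ g.nbr v ↔ v ∈ g.nbr u) ∧ (∀ u v, g.eattr u v = g.eattr v u)

def AGraph.ut {V A : Type} (g : AGraph V A) : (d : ℕ) → V → UT A d
  | 0, v => g.attr v
  | d+1, v => (g.attr v, (g.nbr v).val.map fun u => (g.eattr v u, g.ut d u))

/-- Unfolding tree with non-existence: `none` (the empty tree) for inactive nodes. -/
def AGraph.utE {V A : Type} [DecidableEq V] (g : AGraph V A) (d : ℕ) (v : V) :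
    Option (UT A d) :=
  if v ∈ g.active then some (g.ut d v) else none

/-- 1-WL colors with a distinguished color `cbot` for non-existing nodes. -/
def AGraph.wl {V A C : Type} [DecidableEq V] (g : AGraph V A)
    (h0 : A → C) (h : C × Multiset (A × C) → C) (cbot : C) : ℕ → V → C
  | 0, v => if v ∈ g.active then h0 (g.attr v) else cbot
  | j+1, v => if v ∈ g.active then
      h (g.wl h0 h cbot j v, (g.nbr v).val.map fun u => (g.eattr v u, g.wl h0 h cbot j u))
    else cbot

/-- A continuous-time dynamic graph, given by its current graphs at timestamps
`t_0 < ... < t_T` (indexed by `Fin (T+1)`), with the real-valued timestamps `time`. -/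
structure DynGraph (V A : Type) (T : ℕ) where
  time : Fin (T+1) → ℝ
  time_mono : StrictMono time
  cur : Fin (T+1) → AGraph V A

/-! ### Auxiliary machinery -/

/-- Truncation of an unfolding tree of depth `d+1` to depth `d`. -/
def UTtrunc {A : Type} : (d : ℕ) → UT A (d+1) → UT A d
  | 0, x => x.1
  | d+1, x => (x.1, x.2.map fun p => (p.1, UTtrunc d p.2))

/-- Root attribute of an unfolding tree. -/
def UTattr {A : Type} : (d : ℕ) → UT A d → A
  | 0, a => a
  | _+1, x => x.1

lemma UTattr_trunc {A : Type} (d : ℕ) (x : UT A (d+1)) :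
    UTattr d (UTtrunc d x) = UTattr (d+1) x := by
  cases d <;> rfl

lemma ut_trunc {V A : Type} (g : AGraph V A) :
    ∀ (d : ℕ) (v : V), UTtrunc d (g.ut (d+1) v) = g.ut d v := by
  intro d
  induction d with
  | zero => intro v; rfl
  | succ d ih =>
    intro v
    show (g.attr v, Multiset.map _ (Multiset.map _ (g.nbr v).val)) = _
    rw [Multiset.map_map]
    refine congrArg (Prod.mk _) (Multiset.map_congr rfl ?_)
    intro u _
    simp [Function.comp, ih u]

/-- The function computing the WL color from the (possibly empty) unfolding tree. -/
def Fc {A C : Type} (h0 : A → C) (h : C × Multiset (A × C) → C) (cbot : C) :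
    (j : ℕ) → Option (UT A j) → C
  | 0, none => cbot
  | 0, some a => h0 a
  | j+1, none => cbot
  | j+1, some x =>
      h (Fc h0 h cbot j (some (UTtrunc j x)),
         x.2.map fun p => (p.1, Fc h0 h cbot j (some p.2)))

lemma wl_eq_Fc {V A C : Type} [DecidableEq V] (g : AGraph V A) (hg : g.Valid)
    (h0 : A → C) (h : C × Multiset (A × C) → C) (cbot : C) :
    ∀ (j : ℕ) (v : V), g.wl h0 h cbot j v = Fc h0 h cbot j (g.utE j v) := by
  intro j
  induction j with
  | zero =>
    intro v
    by_cases hv : v ∈ g.active <;> simp [AGraph.wl, AGraph.utE, AGraph.ut, hv, Fc]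
  | succ j ih =>
    intro v
    by_cases hv : v ∈ g.active
    · simp only [AGraph.wl, AGraph.utE, hv, if_pos]
      show h _ = h _
      congr 1
      refine Prod.ext ?_ ?_
      · show g.wl h0 h cbot j v = Fc h0 h cbot j (some (UTtrunc j (g.ut (j+1) v)))
        rw [ut_trunc, ih v, AGraph.utE, if_pos hv]
      · show Multiset.map _ (g.nbr v).val =
          Multiset.map _ ((g.ut (j+1) v).2)
        show Multiset.map _ (g.nbr v).val =
          Multiset.map _ (Multiset.map (fun u => (g.eattr v u, g.ut j u)) (g.nbr v).val)
        rw [Multiset.map_map]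
        refine Multiset.map_congr rfl ?_
        intro u hu
        have hua : u ∈ g.active := hg.1 v u hu
        simp only [Function.comp]
        refine congrArg (Prod.mk _) ?_
        rw [ih u, AGraph.utE, if_pos hua]
    · simp [AGraph.wl, AGraph.utE, hv, Fc]

lemma Fc_inj {A C : Type} (h0 : A → C) (h : C × Multiset (A × C) → C) (cbot : C)
    (h0inj : Function.Injective h0) (hinj : Function.Injective h)
    (hbot0 : ∀ a, h0 a ≠ cbot) (hbot : ∀ x, h x ≠ cbot) :
    ∀ j, Function.Injective (Fc h0 h cbot j) := by
  intro j
  induction j with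
  | zero =>
    rintro (_|a) (_|b) hab
    · rfl
    · exact absurd hab.symm (hbot0 b)
    · exact absurd hab (hbot0 a)
    · exact congrArg some (h0inj hab)
  | succ j ih =>
    rintro (_|x) (_|y) hxy
    · rfl
    · exact absurd hxy.symm (hbot _)
    · exact absurd hxy (hbot _)
    · have heq := hinj hxy
      have h1 : UTtrunc j x = UTtrunc j y := by
        have := congrArg Prod.fst heq
        have := ih this
        exact Option.some_injective _ this
      have ha : x.1 = y.1 := by
        have := congrArg (UTattr j) h1
        rw [UTattr_trunc, UTattr_trunc] at this
        exact this
      have h2 : x.2 = y.2 := by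
        have hm := congrArg Prod.snd heq
        have hfinj : Function.Injective
            (fun p : A × UT A j => (p.1, Fc h0 h cbot j (some p.2))) := by
          rintro ⟨a1, t1⟩ ⟨a2, t2⟩ hp
          have ha' := congrArg Prod.fst hp
          have ht' := congrArg Prod.snd hp
          have := ih (ht' : Fc h0 h cbot j (some t1) = Fc h0 h cbot j (some t2))
          exact Prod.ext ha' (Option.some_injective _ this)
        exact Multiset.map_injective hfinj hm
      exact congrArg some (Prod.ext ha h2)

lemma per_graph {V A C : Type} [DecidableEq V] (g : AGraph V A) (hg : g.Valid)
    (h0 : A → C) (h : C × Multiset (A × C) → C) (cbot : C)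
    (h0inj : Function.Injective h0) (hinj : Function.Injective h)
    (hbot0 : ∀ a, h0 a ≠ cbot) (hbot : ∀ x, h x ≠ cbot) (u v : V) :
    (∀ d : ℕ, g.utE d u = g.utE d v) ↔
      (∀ j : ℕ, g.wl h0 h cbot j u = g.wl h0 h cbot j v) := by
  constructor
  · intro H j
    rw [wl_eq_Fc g hg, wl_eq_Fc g hg, H j]
  · intro H d
    apply Fc_inj h0 h cbot h0inj hinj hbot0 hbot d
    rw [← wl_eq_Fc g hg, ← wl_eq_Fc g hg]
    exact H d

/-- **CUT and CWL equivalence for nodes** (Theorem 1): two nodes of a continuous-time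
dynamic graph have equal (possibly empty) unfolding trees at every timestamp and depth
iff their continuous-time 1-WL colors agree at every timestamp and iteration. -/
theorem cut_equiv_iff_cwl_equiv {V A C : Type} [DecidableEq V] {T : ℕ}
    (G : DynGraph V A T) (hG : ∀ i, (G.cur i).Valid)
    (h0 : Fin (T+1) → A → C) (h : Fin (T+1) → C × Multiset (A × C) → C) (cbot : C)
    (h0inj : ∀ i, Function.Injective (h0 i))
    (hinj : ∀ i, Function.Injective (h i))
    (hbot0 : ∀ i a, h0 i a ≠ cbot)
    (hbot : ∀ i x, h i x ≠ cbot)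
    (hdisj : ∀ i x a, h i x ≠ h0 i a)
    (u v : V) :
    (∀ (i : Fin (T+1)) (d : ℕ), (G.cur i).utE d u = (G.cur i).utE d v) ↔
      (∀ (i : Fin (T+1)) (j : ℕ),
        (G.cur i).wl (h0 i) (h i) cbot j u = (G.cur i).wl (h0 i) (h i) cbot j v) := by
  exact forall_congr' fun i =>
    per_graph (G.cur i) (hG i) (h0 i) (h i) cbot (h0inj i) (hinj i)
      (hbot0 i) (hbot i) u v
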